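/- Let K be a field of characteristic 0, G a group, N a normal subgroup of G of finite index, and V a K-linear representation of G which is finite-dimensional over K. Then V is semisimple as a representation of G if and only if its restriction to N is semisimple as a representation of N. -/

import Mathlib

/-!
Restriction to `N` (Clifford): since `N` is normal, each `ρ g` permutes the simple
subrepresentations of `ρ|_N`, so their sum, the socle, is `G`-stable. A nonzero `G`-complement
of the socle would contain a simple `N`-subrepresentation (finite dimension), which lies in the
socle; hence the socle is everything, and `ρ|_N` is semisimple.

Back to `G` (averaging): given a `G`-subrepresentation `p`, project onto it along an
`N`-complement. The projection `π` commutes with `N`, so `ρ g ∘ π ∘ ρ g⁻¹` depends only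
on `g N`; averaging it over the finitely many cosets, which is possible as `[G : N]` is invertible
in `K`, gives a `G`-equivariant projection onto `p`, whose kernel is a `G`-complement.
-/

open scoped MonoidAlgebra
open LinearMap Representation

section Lattice

variable {α : Type*} [CompleteLattice α]

theorem OrderIso.map_sSup_setOf_isAtom (φ : α ≃o α) :
    φ (sSup {a | IsAtom a}) = sSup {a | IsAtom a} := by
  rw [φ.map_sSup, ← sSup_image]
  congr 1
  ext a
  refine ⟨?_, fun ha => ⟨φ.symm a, (φ.symm.isAtom_iff a).2 ha, φ.apply_symm_apply a⟩⟩
  rintro ⟨b, hb, rfl⟩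
  exact (φ.isAtom_iff b).2 hb

theorem eq_bot_of_disjoint_sSup_setOf_isAtom [IsAtomic α] {x : α}
    (h : Disjoint (sSup {a | IsAtom a}) x) : x = ⊥ := by
  obtain hx | ⟨a, ha, hax⟩ := eq_bot_or_exists_atom_le x
  · exact hx
  · have hle : a ≤ sSup {a | IsAtom a} := le_sSup ha
    exact absurd (disjoint_self.1 ((h.mono_left hle).mono_right hax)) ha.1

end Lattice

namespace LinearMap.IsProj

variable {K V : Type*} [Field K] [AddCommGroup V] [Module K V] {p : Submodule K V}

theorem inv_card_smul_sum {ι : Type*} [Fintype ι] {f : ι → Module.End K V}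
    (hf : ∀ i, IsProj p (f i)) (hι : (Fintype.card ι : K) ≠ 0) :
    IsProj p ((Fintype.card ι : K)⁻¹ • ∑ i, f i) where
  map_mem x := by
    rw [smul_apply, sum_apply]
    exact p.smul_mem _ (p.sum_mem fun i _ => (hf i).map_mem x)
  map_id x hx := by
    simp [(hf _).map_id x hx, ← Nat.cast_smul_eq_nsmul K, smul_smul, inv_mul_cancel₀ hι]

end LinearMap.IsProj

theorem Submodule.isProj_projection {R E : Type*} [Ring R] [AddCommGroup E] [Module R E]
    {p q : Submodule R E} (hpq : IsCompl p q) : IsProj p (p.projection q hpq) :=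
  ⟨p.projection_apply_mem hpq, fun _ hx => p.projection_apply_of_mem_left hpq hx⟩

theorem Submodule.commute_projection {R E : Type*} [Ring R] [AddCommGroup E] [Module R E]
    {p q : Submodule R E} (hpq : IsCompl p q) {T : Module.End R E}
    (hp : p ∈ Module.End.invtSubmodule T) (hq : q ∈ Module.End.invtSubmodule T) :
    Commute (p.projection q hpq) T :=
  (isIdempotentElem_projection hpq).commute_iff.2
    ⟨by rwa [range_projection], by rwa [ker_projection]⟩

namespace Subrepresentation

variable {K G H V : Type*} [CommRing K] [Monoid G] [Monoid H] [AddCommGroup V] [Module K V]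
  {ρ : Representation K G V}

theorem disjoint_toSubmodule {W₁ W₂ : Subrepresentation ρ} :
    Disjoint W₁.toSubmodule W₂.toSubmodule ↔ Disjoint W₁ W₂ := by
  rw [disjoint_iff, disjoint_iff, ← toSubmodule_inf, ← toSubmodule_injective.eq_iff]
  rfl

theorem codisjoint_toSubmodule {W₁ W₂ : Subrepresentation ρ} :
    Codisjoint W₁.toSubmodule W₂.toSubmodule ↔ Codisjoint W₁ W₂ := by
  rw [codisjoint_iff, codisjoint_iff, ← toSubmodule_sup, ← toSubmodule_injective.eq_iff]
  rfl

theorem isCompl_toSubmodule {W₁ W₂ : Subrepresentation ρ} :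
    IsCompl W₁.toSubmodule W₂.toSubmodule ↔ IsCompl W₁ W₂ := by
  rw [isCompl_iff, isCompl_iff, disjoint_toSubmodule, codisjoint_toSubmodule]

def restrict (f : H →* G) (W : Subrepresentation ρ) : Subrepresentation (ρ.comp f) :=
  ⟨W.toSubmodule, fun h _ hv => W.apply_mem_toSubmodule (f h) hv⟩

theorem restrict_injective (f : H →* G) :
    Function.Injective (restrict (ρ := ρ) f) := fun _ _ h =>
  toSubmodule_injective (congr_arg toSubmodule h :)

theorem disjoint_restrict_iff (f : H →* G) {W₁ W₂ : Subrepresentation ρ} :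
    Disjoint (W₁.restrict f) (W₂.restrict f) ↔ Disjoint W₁ W₂ := by
  rw [← disjoint_toSubmodule, ← disjoint_toSubmodule]
  rfl

variable {K G V : Type*} [CommRing K] [Group G] [AddCommGroup V] [Module K V]
  {ρ : Representation K G V} (N : Subgroup G) [N.Normal]

def comapOfNormal (g : G) (W : Subrepresentation (ρ.comp N.subtype)) :
    Subrepresentation (ρ.comp N.subtype) where
  toSubmodule := W.toSubmodule.comap (ρ g)
  apply_mem_toSubmodule n x hx := by
    have hconj : ρ (g * n * g⁻¹) (ρ g x) = ρ g (ρ n x) := by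
      simp only [← Module.End.mul_apply, ← map_mul, inv_mul_cancel_right]
    show ρ g (ρ n x) ∈ W.toSubmodule
    rw [← hconj]
    exact W.apply_mem_toSubmodule ⟨g * n * g⁻¹, ‹N.Normal›.conj_mem n n.2 g⟩ hx

@[simp] theorem mem_comapOfNormal {g : G} {W : Subrepresentation (ρ.comp N.subtype)} {x : V} :
    x ∈ comapOfNormal N g W ↔ ρ g x ∈ W := Iff.rfl

def comapOrderIso (g : G) :
    Subrepresentation (ρ.comp N.subtype) ≃o Subrepresentation (ρ.comp N.subtype) :=
  Equiv.toOrderIso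
    { toFun := comapOfNormal N g
      invFun := comapOfNormal N g⁻¹
      left_inv W := SetLike.ext fun x => by simp
      right_inv W := SetLike.ext fun x => by simp }
    (fun _ _ h _ hx => h hx) (fun _ _ h _ hx => h hx)

end Subrepresentation

namespace Representation

variable {K G V : Type*} [Field K] [Group G] [AddCommGroup V] [Module K V]
  (ρ : Representation K G V)

theorem linHom_self_apply_eq_iff_commute (g : G) (f : Module.End K V) :
    linHom ρ ρ g f = f ↔ Commute f (ρ g) := by
  rw [linHom_apply, commute_iff_eq]
  constructor <;> intro h <;> ext x
  · simpa using (LinearMap.congr_fun h (ρ g x)).symm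
  · simpa using (LinearMap.congr_fun h (ρ g⁻¹ x)).symm

variable {ρ}

theorem _root_.LinearMap.IsProj.linHom {p : Subrepresentation ρ} {f : Module.End K V}
    (hf : IsProj p.toSubmodule f) (g : G) : IsProj p.toSubmodule (linHom ρ ρ g f) where
  map_mem x := p.apply_mem_toSubmodule g (hf.map_mem _)
  map_id x hx := by
    rw [linHom_apply, comp_apply, comp_apply, hf.map_id _ (p.apply_mem_toSubmodule g⁻¹ hx),
      self_inv_apply]

theorem exists_isProj_forall_commute (N : Subgroup G) [N.Normal] [NeZero (N.index : K)]
    {p : Subrepresentation ρ} {f : Module.End K V} (hf : IsProj p.toSubmodule f)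
    (hfN : ∀ n : N, Commute f (ρ n)) :
    ∃ P : Module.End K V, IsProj p.toSubmodule P ∧ ∀ g, Commute P (ρ g) := by
  have : N.FiniteIndex := ⟨fun h => NeZero.ne (N.index : K) (by rw [h, Nat.cast_zero])⟩
  let _ : Fintype (G ⧸ N) := Subgroup.fintypeQuotientOfFiniteIndex
  -- `G ⧸ N` acts on the `N`-equivariant endomorphisms by conjugation
  let σ := (linHom ρ ρ).quotientToInvariants N
  let f' : invariants ((linHom ρ ρ).comp N.subtype) :=
    ⟨f, fun n => (linHom_self_apply_eq_iff_commute ρ n f).2 (hfN n)⟩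
  have hcard : (Fintype.card (G ⧸ N) : K) ≠ 0 := by
    rw [← Nat.card_eq_fintype_card, ← N.index_eq_card]
    exact NeZero.ne _
  refine ⟨(Fintype.card (G ⧸ N) : K)⁻¹ • (σ.norm f' : Module.End K V), ?_, fun g => ?_⟩
  · have hnorm : (σ.norm f' : Module.End K V) = ∑ c, (σ c f' : Module.End K V) := by
      rw [norm, LinearMap.sum_apply, Submodule.coe_sum]
    rw [hnorm]
    refine IsProj.inv_card_smul_sum (fun c => ?_) hcard
    induction c using QuotientGroup.induction_on with
    | H g => exact hf.linHom g
  · rw [← linHom_self_apply_eq_iff_commute, map_smul]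
    congr 1
    exact congr_arg Subtype.val (σ.self_norm_apply (g : G ⧸ N) f')

theorem IsSemisimpleRepresentation.of_comp_subtype (N : Subgroup G) [N.Normal]
    [NeZero (N.index : K)] (h : IsSemisimpleRepresentation (ρ.comp N.subtype)) :
    IsSemisimpleRepresentation ρ := by
  refine ⟨fun p => ?_⟩
  obtain ⟨q, hq⟩ := exists_isCompl (p.restrict N.subtype)
  have hpq : IsCompl p.toSubmodule q.toSubmodule := Subrepresentation.isCompl_toSubmodule.2 hq
  obtain ⟨P, hP, hPG⟩ := exists_isProj_forall_commute N (p.toSubmodule.isProj_projection hpq)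
    fun n => p.toSubmodule.commute_projection hpq
      (fun _ hx => p.apply_mem_toSubmodule n hx) (fun _ hx => q.apply_mem_toSubmodule n hx)
  let C : Subrepresentation ρ := ⟨ker P, fun g x hx => by
    rw [mem_ker, ← Module.End.mul_apply, (hPG g).eq, Module.End.mul_apply, mem_ker.1 hx,
      map_zero]⟩
  exact ⟨C, Subrepresentation.isCompl_toSubmodule.1 hP.isCompl⟩

theorem IsSemisimpleRepresentation.comp_subtype [FiniteDimensional K V] (N : Subgroup G)
    [N.Normal] (h : IsSemisimpleRepresentation ρ) :
    IsSemisimpleRepresentation (ρ.comp N.subtype) := by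
  let e : Subrepresentation (ρ.comp N.subtype) ≃o
      Submodule K[N] (asModule (ρ.comp N.subtype)) :=
    Subrepresentation.subrepresentationSubmoduleOrderIso
  have : IsArtinian K[N] (asModule (ρ.comp N.subtype)) := isArtinian_of_tower K inferInstance
  let socle : Subrepresentation (ρ.comp N.subtype) := e.symm (sSup {m | IsAtom m})
  have hconj (g : G) : Subrepresentation.comapOrderIso N g socle = socle :=
    e.injective (e.symm.trans ((Subrepresentation.comapOrderIso N g).trans e)).map_sSup_setOf_isAtom
  let socleG : Subrepresentation ρ := ⟨socle.toSubmodule, fun g x hx => by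
    rw [← hconj g] at hx
    exact hx⟩
  obtain ⟨C, hcompl⟩ := exists_isCompl socleG
  have hCN : e (C.restrict N.subtype) = ⊥ := by
    refine eq_bot_of_disjoint_sSup_setOf_isAtom ?_
    rw [← e.apply_symm_apply (sSup _), disjoint_map_orderIso_iff]
    exact (Subrepresentation.disjoint_restrict_iff N.subtype).2 hcompl.disjoint
  have hC : C = ⊥ :=
    Subrepresentation.restrict_injective N.subtype (e.injective (hCN.trans e.map_bot.symm))
  have hsocle : socle = ⊤ :=
    congr_arg (Subrepresentation.restrict N.subtype) (eq_top_of_isCompl_bot (hC ▸ hcompl) :)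
  refine e.complementedLattice_iff.2 (complementedLattice_of_sSup_atoms_eq_top ?_)
  rw [← e.apply_symm_apply (sSup _)]
  exact (congr_arg e hsocle).trans e.map_top

end Representation

/-- Let `K` be a field of characteristic `0`, `G` a group, `N` a normal subgroup of finite
index, and `V` a finite-dimensional `K`-linear representation of `G`. Then `V` is semisimple
as a representation of `G` if and only if its restriction to `N` is semisimple as a
representation of `N`. -/
theorem semisimple_iff_restriction_semisimple
    (K : Type*) [Field K] [CharZero K] (G : Type*) [Group G]
    (N : Subgroup G) [N.Normal] [N.FiniteIndex]
    (V : Type*) [AddCommGroup V] [Module K V] [FiniteDimensional K V]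
    (ρ : Representation K G V) :
    IsSemisimpleModule (MonoidAlgebra K G) ρ.asModule ↔
      IsSemisimpleModule (MonoidAlgebra K ↥N) (Representation.asModule (ρ.comp N.subtype)) := by
  have : NeZero (N.index : K) := ⟨Nat.cast_ne_zero.2 Subgroup.FiniteIndex.index_ne_zero⟩
  simp only [← isSemisimpleRepresentation_iff_isSemisimpleModule_asModule]
  exact ⟨IsSemisimpleRepresentation.comp_subtype N, .of_comp_subtype N⟩
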